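/- arXiv:2009.08172 — 9 statements merged into one kernel-verified Lean document; each statement's English description precedes it below -/
import Mathlib

section
/- The 3-dimensional matching problem reduces to the 3-covariate κ-fine-balance selection problem: given a finite set X and U ⊆ X×X×X, construct the 3-covariate instance where each covariate has levels X ∪ {0,0'}, the treatment group consists of samples (i,i,i) for i ∈ X together with |X| copies each of (0,0,0) and (0',0',0'), and the control group consists of (u_1,u_2,u_3) for each u ∈ U, plus (κ−1) copies of each of (i,0',0), (0',0,i), (0,i,0') for every i ∈ X, plus |X| copies each of (0,0,0) and (0',0',0'). Then there exists a pair (S,S') satisfying the 3-covariate κ-fine-balance constraints with |S| = 3|X| if and only if there exists M ⊆ U with |M| = |X| such that no two elements of M agree in any coordinate. -/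
/-!
A selection with `|S| = 3|X|` takes every treatment sample. Level `i` of covariate `p` then
needs `κ` selected controls, at most `κ - 1` of which are dummies, so every `i` occurs in every
coordinate of some selected triple of `U`. The dummies `(i, 0', 0)` are counted both at level `i`
of covariate 0 and at level `0` of covariate 2, so comparing these balance equations shows that
at most `|X|` triples of `U` are selected. Hence every coordinate map is a bijection from the
selected triples onto `X`, i.e. they form a matching. Conversely, a matching together with all
dummies and all copies of `(0,0,0)` and `(0',0',0')` is balanced.
-/

open Finset

/-- Treatment samples of the 3-dimensional-matching reduction: `(i,i,i)` for `i ∈ X`,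
`|X|` copies of `(0,0,0)` (indexed by `X`) and `|X|` copies of `(0',0',0')`. -/
def tdmLevT {X : Type*} : (X ⊕ X ⊕ X) → Fin 3 → X ⊕ Fin 2
  | Sum.inl i, _ => Sum.inl i
  | Sum.inr (Sum.inl _), _ => Sum.inr 0
  | Sum.inr (Sum.inr _), _ => Sum.inr 1

/-- Control samples of the reduction: `C₁` indexed by `U`, `C₂` consisting of copies
(indexed by `W`, instantiated as `Fin (κ-1)`) of `(i,0',0)`, `(0',0,i)`, `(0,i,0')` for
`i ∈ X`, and `C₃`: `|X|` copies each of `(0,0,0)` and `(0',0',0')`. -/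
def tdmLevC {X W : Type*} (U : Finset (X × X × X)) :
    ({u // u ∈ U} ⊕ (X × Fin 3 × W) ⊕ (X ⊕ X)) → Fin 3 → X ⊕ Fin 2
  | Sum.inl u, p => ![Sum.inl u.1.1, Sum.inl u.1.2.1, Sum.inl u.1.2.2] p
  | Sum.inr (Sum.inl (i, j, _)), p =>
      ![![Sum.inl i, Sum.inr 1, Sum.inr 0],
        ![Sum.inr 1, Sum.inr 0, Sum.inl i],
        ![Sum.inr 0, Sum.inl i, Sum.inr 1]] j p
  | Sum.inr (Sum.inr (Sum.inl _)), _ => Sum.inr 0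
  | Sum.inr (Sum.inr (Sum.inr _)), _ => Sum.inr 1

lemma Finset.card_filter_disjSum {α β : Type*} (s : Finset α) (t : Finset β)
    (P : α ⊕ β → Prop) [DecidablePred P] :
    #((s.disjSum t).filter P) = #(s.filter (P ∘ Sum.inl)) + #(t.filter (P ∘ Sum.inr)) := by
  simp only [card_filter, sum_disjSum, Function.comp_apply]

lemma Finset.card_filter_eq_one_of_injOn {α β : Type*} [Fintype β] [DecidableEq β]
    {s : Finset α} {f : α → β} (hf : Set.InjOn f s) (hs : #s = Fintype.card β) (b : β) :
    #(s.filter (f · = b)) = 1 := by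
  obtain ⟨a, ha, rfl⟩ :=
    surjOn_of_injOn_of_card_le (t := univ) f (fun _ _ => mem_coe.2 (mem_univ _)) hf
      (by simp [hs]) (mem_coe.2 (mem_univ b))
  rw [card_eq_one]
  refine ⟨a, ?_⟩
  ext x
  simp only [mem_filter, mem_singleton]
  exact ⟨fun hx => hf hx.1 ha hx.2, by rintro rfl; exact ⟨ha, rfl⟩⟩

lemma Finset.exists_subset_iff_exists_subtype {α : Type*} [DecidableEq α] (U : Finset α)
    (P : Finset α → Prop) :
    (∃ M ⊆ U, P M) ↔ ∃ A : Finset {u // u ∈ U}, P (A.map (Function.Embedding.subtype _)) := by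
  refine ⟨fun ⟨M, hMU, hM⟩ => ⟨M.subtype (· ∈ U), ?_⟩,
    fun ⟨A, hA⟩ => ⟨_, map_subtype_subset A, hA⟩⟩
  rwa [subtype_map, filter_true_of_mem hMU]

def tripleCoord {X : Type*} (p : Fin 3) (u : X × X × X) : X := ![u.1, u.2.1, u.2.2] p

lemma pairwise_ne_iff_forall_injOn_tripleCoord {X : Type*} (M : Finset (X × X × X)) :
    (∀ u ∈ M, ∀ v ∈ M, u ≠ v → u.1 ≠ v.1 ∧ u.2.1 ≠ v.2.1 ∧ u.2.2 ≠ v.2.2)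
      ↔ ∀ p, Set.InjOn (tripleCoord p) (M : Set (X × X × X)) := by
  refine ⟨fun h p u hu v hv huv => ?_, fun h u hu v hv hne => ?_⟩
  · by_contra hne
    obtain ⟨h₁, h₂, h₃⟩ := h u hu v hv hne
    fin_cases p
    exacts [h₁ huv, h₂ huv, h₃ huv]
  · exact ⟨fun e => hne (h 0 hu hv e), fun e => hne (h 1 hu hv e), fun e => hne (h 2 hu hv e)⟩

section Levels

variable {X W : Type*} (U : Finset (X × X × X))

@[simp]
lemma tdmLevC_inl (u : {u // u ∈ U}) (p : Fin 3) :
    tdmLevC (W := W) U (Sum.inl u) p = Sum.inl (tripleCoord p u.1) := by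
  fin_cases p <;> rfl

-- The three dummy blocks form a Latin square: each covariate sees `i`, `0'` and `0` once.
lemma tdmLevC_dummy (i : X) (j : Fin 3) (w : W) (p : Fin 3) :
    tdmLevC U (Sum.inr (Sum.inl (i, j, w))) p = ![Sum.inl i, Sum.inr 1, Sum.inr 0] (j + p) := by
  fin_cases j <;> fin_cases p <;> rfl

lemma tdmLevC_dummy_eq_inl_iff (x : X × Fin 3 × W) (p : Fin 3) (i : X) :
    tdmLevC U (Sum.inr (Sum.inl x)) p = Sum.inl i ↔ x.1 = i ∧ x.2.1 = -p := by
  obtain ⟨i', j, w⟩ := x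
  rw [tdmLevC_dummy]
  fin_cases j <;> fin_cases p <;> simp +decide

lemma tdmLevC_dummy_eq_inr_iff (x : X × Fin 3 × W) (p : Fin 3) (b : Fin 2) :
    tdmLevC U (Sum.inr (Sum.inl x)) p = Sum.inr b ↔ x.2.1 = -p - 1 - b.castSucc := by
  obtain ⟨i', j, w⟩ := x
  rw [tdmLevC_dummy]
  fin_cases j <;> fin_cases p <;> fin_cases b <;> simp +decide

@[simp]
lemma tdmLevC_const (y : X ⊕ X) (p : Fin 3) :
    tdmLevC (W := W) U (Sum.inr (Sum.inr y)) p
      = Sum.inr (y.elim (fun _ => 0) (fun _ => 1)) := by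
  rcases y with y | y <;> rfl

end Levels

section FineBalance

variable {X W : Type*} [DecidableEq X] (U : Finset (X × X × X))

def IsFineBalanced (κ : ℕ) (S : Finset (X ⊕ X ⊕ X))
    (S' : Finset ({u // u ∈ U} ⊕ (X × Fin 3 × W) ⊕ (X ⊕ X))) : Prop :=
  ∀ (p : Fin 3) (v : X ⊕ Fin 2),
    κ * #(S.filter (fun t => tdmLevT t p = v)) = #(S'.filter (fun c => tdmLevC U c p = v))

lemma card_filter_tdmLevC_inl (A : Finset {u // u ∈ U}) (B : Finset (X × Fin 3 × W))
    (C : Finset (X ⊕ X)) (p : Fin 3) (i : X) :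
    #((A.disjSum (B.disjSum C)).filter (fun c => tdmLevC U c p = Sum.inl i))
      = #(A.filter (fun u => tripleCoord p u.1 = i))
        + #(B.filter (fun x => x.1 = i ∧ x.2.1 = -p)) := by
  simp [card_filter_disjSum, tdmLevC_dummy_eq_inl_iff]

lemma card_filter_tdmLevC_inr (A : Finset {u // u ∈ U}) (B : Finset (X × Fin 3 × W))
    (C : Finset (X ⊕ X)) (p : Fin 3) (b : Fin 2) :
    #((A.disjSum (B.disjSum C)).filter (fun c => tdmLevC U c p = Sum.inr b))
      = #(B.filter (fun x => x.2.1 = -p - 1 - b.castSucc))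
        + #(C.filter (fun y => y.elim (fun _ => 0) (fun _ => 1) = b)) := by
  simp [card_filter_disjSum, tdmLevC_dummy_eq_inr_iff]

variable [Fintype X]

lemma card_filter_tdmLevT_inl (p : Fin 3) (i : X) :
    #(univ.filter (fun t : X ⊕ X ⊕ X => tdmLevT t p = Sum.inl i)) = 1 := by
  rw [card_eq_one]
  refine ⟨Sum.inl i, ?_⟩
  ext t
  rw [mem_filter]
  rcases t with j | j | j <;> simp [tdmLevT]

lemma card_filter_tdmLevT_inr (p : Fin 3) (b : Fin 2) :
    #(univ.filter (fun t : X ⊕ X ⊕ X => tdmLevT t p = Sum.inr b)) = Fintype.card X := by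
  rw [← univ_disjSum_univ, card_filter_disjSum, ← univ_disjSum_univ, card_filter_disjSum]
  fin_cases b <;> simp [tdmLevT, Function.comp_def]

end FineBalance

section Counting

variable {X W : Type*} [Fintype X] [Fintype W]

lemma card_filter_fst_eq_and_snd_eq [DecidableEq X] (i : X) (j : Fin 3) :
    #(univ.filter (fun x : X × Fin 3 × W => x.1 = i ∧ x.2.1 = j)) = Fintype.card W := by
  have : univ.filter (fun x : X × Fin 3 × W => x.1 = i ∧ x.2.1 = j) = {i} ×ˢ {j} ×ˢ univ := by
    ext ⟨a, b, c⟩; simp [eq_comm, and_comm]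
  simp [this]

lemma card_filter_snd_eq (j : Fin 3) :
    #(univ.filter (fun x : X × Fin 3 × W => x.2.1 = j)) = Fintype.card X * Fintype.card W := by
  have : univ.filter (fun x : X × Fin 3 × W => x.2.1 = j) = univ ×ˢ {j} ×ˢ univ := by
    ext ⟨a, b, c⟩; simp [eq_comm, and_comm]
  simp [this]

lemma card_filter_elim_eq (b : Fin 2) :
    #(univ.filter (fun y : X ⊕ X => y.elim (fun _ => 0) (fun _ => 1) = b)) = Fintype.card X := by
  rw [← univ_disjSum_univ, card_filter_disjSum]
  fin_cases b <;> simp [Function.comp_def]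

end Counting

section Reduction

variable {X W : Type*} [Fintype X] [DecidableEq X] [Fintype W] {U : Finset (X × X × X)}

theorem card_eq_and_injOn_of_isFineBalanced {A : Finset {u // u ∈ U}}
    {B : Finset (X × Fin 3 × W)} {C : Finset (X ⊕ X)}
    (h : IsFineBalanced U (Fintype.card W + 1) univ (A.disjSum (B.disjSum C))) :
    #A = Fintype.card X ∧ ∀ p, Set.InjOn (fun u : {u // u ∈ U} => tripleCoord p u.1) A := by
  have hcov (p : Fin 3) (i : X) : #(A.filter (fun u => tripleCoord p u.1 = i))
      + #(B.filter (fun x => x.1 = i ∧ x.2.1 = -p)) = Fintype.card W + 1 := by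
    have := h p (Sum.inl i)
    rw [card_filter_tdmLevT_inl, card_filter_tdmLevC_inl] at this
    omega
  have hsurj (p : Fin 3) :
      Set.SurjOn (fun u : {u // u ∈ U} => tripleCoord p u.1) A (univ : Finset X) := by
    intro i _
    have hB : #(B.filter (fun x => x.1 = i ∧ x.2.1 = -p)) ≤ Fintype.card W :=
      (card_le_card (filter_subset_filter _ (subset_univ B))).trans_eq
        (card_filter_fst_eq_and_snd_eq i (-p))
    obtain ⟨u, hu⟩ : (A.filter (fun u => tripleCoord p u.1 = i)).Nonempty := by
      rw [← card_pos]; have := hcov p i; omega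
    exact ⟨u, (mem_filter.1 hu).1, (mem_filter.1 hu).2⟩
  have hsum : #A + #(B.filter (fun x => x.2.1 = 0))
      = (Fintype.card W + 1) * Fintype.card X := by
    rw [card_eq_sum_card_fiberwise (f := fun u => tripleCoord 0 u.1) (t := univ)
        (fun _ _ => mem_coe.2 (mem_univ _)),
      card_eq_sum_card_fiberwise (f := Prod.fst) (t := univ) (fun _ _ => mem_coe.2 (mem_univ _)),
      ← sum_add_distrib]
    simp_rw [filter_filter, and_comm (a := _ = (0 : Fin 3))]
    have hcov0 := hcov 0
    simp only [neg_zero] at hcov0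
    simp only [hcov0, sum_const, card_univ, smul_eq_mul, mul_comm]
  have hlevel0 : (Fintype.card W + 1) * Fintype.card X = #(B.filter (fun x => x.2.1 = 0))
      + #(C.filter (fun y => y.elim (fun _ => 0) (fun _ => 1) = (0 : Fin 2))) := by
    have := h 2 (Sum.inr 0)
    rwa [card_filter_tdmLevT_inr, card_filter_tdmLevC_inr,
      show (-2 - 1 - Fin.castSucc 0 : Fin 3) = 0 by decide] at this
  have hC : #(C.filter (fun y => y.elim (fun _ => 0) (fun _ => 1) = (0 : Fin 2)))
      ≤ Fintype.card X :=
    (card_le_card (filter_subset_filter _ (subset_univ C))).trans_eq (card_filter_elim_eq 0)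
  have hA : #A ≤ Fintype.card X := by omega
  refine ⟨hA.antisymm (by simpa using card_le_card_of_surjOn _ (hsurj 0)), fun p => ?_⟩
  exact injOn_of_surjOn_of_card_le _ (fun _ _ => mem_coe.2 (mem_univ _)) (hsurj p)
    (by simpa using hA)

theorem isFineBalanced_of_injOn {A : Finset {u // u ∈ U}} (hA : #A = Fintype.card X)
    (hinj : ∀ p, Set.InjOn (fun u : {u // u ∈ U} => tripleCoord p u.1) A) :
    IsFineBalanced U (Fintype.card W + 1) univ
      (A.disjSum ((univ : Finset (X × Fin 3 × W)).disjSum univ)) := by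
  rintro p (i | b)
  · rw [card_filter_tdmLevT_inl, card_filter_tdmLevC_inl,
      card_filter_eq_one_of_injOn (hinj p) hA, card_filter_fst_eq_and_snd_eq]
    ring
  · rw [card_filter_tdmLevT_inr, card_filter_tdmLevC_inr, card_filter_snd_eq,
      card_filter_elim_eq]
    ring

end Reduction

/-- 3-dimensional matching reduces to the 3-covariate κ-fine-balance
selection problem: the constructed instance has a κ-fine-balanced pair `(S,S')` with
`|S| = 3|X|` iff there is a 3-dimensional matching `M ⊆ U` of size `|X|`. -/
theorem stmt_5 {X : Type*} [Fintype X] [DecidableEq X]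
    (U : Finset (X × X × X)) (κ : ℕ) (hκ : 1 ≤ κ) :
    (∃ (S : Finset (X ⊕ X ⊕ X))
       (S' : Finset ({u // u ∈ U} ⊕ (X × Fin 3 × Fin (κ - 1)) ⊕ (X ⊕ X))),
       (∀ (p : Fin 3) (v : X ⊕ Fin 2),
         κ * (S.filter (fun t => tdmLevT t p = v)).card
           = (S'.filter (fun c => tdmLevC U c p = v)).card) ∧
       S.card = 3 * Fintype.card X)
    ↔ ∃ M ⊆ U, M.card = Fintype.card X ∧
        ∀ u ∈ M, ∀ v ∈ M, u ≠ v →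
          u.1 ≠ v.1 ∧ u.2.1 ≠ v.2.1 ∧ u.2.2 ≠ v.2.2 := by
  have hκ' : Fintype.card (Fin (κ - 1)) + 1 = κ := by simp; omega
  simp_rw [pairwise_ne_iff_forall_injOn_tripleCoord]
  rw [exists_subset_iff_exists_subtype]
  simp only [card_map, coe_map, Function.Embedding.coe_subtype,
    ← Set.injOn_subtype_val.comp_iff]
  constructor
  · rintro ⟨S, S', hbal, hS⟩
    obtain rfl : S = univ := eq_univ_of_card S (by simp [hS]; ring)
    refine ⟨S'.toLeft, card_eq_and_injOn_of_isFineBalanced (B := S'.toRight.toLeft)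
      (C := S'.toRight.toRight) ?_⟩
    rwa [hκ', toLeft_disjSum_toRight, toLeft_disjSum_toRight]
  · rintro ⟨A, hA, hinj⟩
    exact ⟨univ, _, hκ' ▸ isFineBalanced_of_injOn hA hinj, by simp; ring⟩
end

section
/- In the 3-dimensional matching reduction instance, any feasible selection (S,S') for the 3-covariate κ-fine-balance problem with |S| = 3|X| must select all treatment samples and all control samples in C_2 ∪ C_3, where C_2 consists of the (κ−1) copies of (i,0',0), (0',0,i), (0,i,0') for i ∈ X and C_3 consists of the |X| copies each of (0,0,0) and (0',0',0'). -/
open Finset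

/-!
Since `|S| = 3|X|` is the number of all treatment samples, `S` is everything. Fine balance at
the levels `0` and `0'` then asks for `κ|X|` selected controls at each, and there are exactly
`κ|X|` controls at that level on every covariate, so all of them are selected. Every control in
`C₂ ∪ C₃` carries level `0` or `0'` on some covariate.
-/

theorem Finset.mem_of_card_filter_univ_le {α : Type*} [Fintype α] {s : Finset α}
    {P : α → Prop} [DecidablePred P] (h : #(univ.filter P) ≤ #(s.filter P)) {a : α}
    (ha : P a) : a ∈ s := by
  have hs := eq_of_subset_of_card_le (filter_subset_filter P (subset_univ s)) h
  exact (mem_filter.mp (hs ▸ mem_filter.mpr ⟨mem_univ a, ha⟩)).1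

theorem card_filter_tdmLevT_eq_inr {X : Type*} [Fintype X] [DecidableEq X] (p : Fin 3) (v : Fin 2) :
    #(univ.filter fun t : X ⊕ X ⊕ X => tdmLevT t p = Sum.inr v) = Fintype.card X := by
  rw [card_filter]
  fin_cases v <;> simp [Fintype.sum_sum_type, tdmLevT]

theorem card_filter_tdmLevC_eq_inr {X : Type*} [Fintype X] [DecidableEq X]
    (U : Finset (X × X × X)) {κ : ℕ} (hκ : 1 ≤ κ) (p : Fin 3) (v : Fin 2) :
    #(univ.filter fun c : {u // u ∈ U} ⊕ (X × Fin 3 × Fin (κ - 1)) ⊕ (X ⊕ X) =>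
      tdmLevC U c p = Sum.inr v) = κ * Fintype.card X := by
  obtain ⟨k, rfl⟩ := Nat.exists_eq_add_of_le' hκ
  rw [card_filter, Fintype.sum_sum_type, Fintype.sum_sum_type, Fintype.sum_sum_type,
    Fintype.sum_prod_type]
  simp only [Fintype.sum_prod_type, Fin.sum_univ_three]
  fin_cases p <;> fin_cases v <;> simp [tdmLevC] <;> ring

theorem exists_tdmLevC_inr_eq {X W : Type*} (U : Finset (X × X × X))
    (y : (X × Fin 3 × W) ⊕ (X ⊕ X)) : ∃ p v, tdmLevC U (Sum.inr y) p = Sum.inr v := by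
  rcases y with ⟨i, j, w⟩ | i | i
  -- the row `j` of `C₂` has level `0` at covariate `2 - j`
  · exact ⟨![2, 1, 0] j, 0, by fin_cases j <;> rfl⟩
  · exact ⟨0, 0, rfl⟩
  · exact ⟨0, 1, rfl⟩

/-- In the 3-dimensional-matching reduction instance, any feasible selection
`(S,S')` with `|S| = 3|X|` must select all treatment samples, and all control samples
in `C₂ ∪ C₃`. -/
theorem stmt_6 {X : Type*} [Fintype X] [DecidableEq X]
    (U : Finset (X × X × X)) (κ : ℕ) (hκ : 1 ≤ κ)
    (S : Finset (X ⊕ X ⊕ X))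
    (S' : Finset ({u // u ∈ U} ⊕ (X × Fin 3 × Fin (κ - 1)) ⊕ (X ⊕ X)))
    (hfb : ∀ (p : Fin 3) (v : X ⊕ Fin 2),
      κ * (S.filter (fun t => tdmLevT t p = v)).card
        = (S'.filter (fun c => tdmLevC U c p = v)).card)
    (hcard : S.card = 3 * Fintype.card X) :
    S = Finset.univ ∧
    ∀ y : (X × Fin 3 × Fin (κ - 1)) ⊕ (X ⊕ X), Sum.inr y ∈ S' := by
  have hS : S = univ :=
    eq_univ_of_card S (by rw [hcard, Fintype.card_sum, Fintype.card_sum]; ring)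
  refine ⟨hS, fun y => ?_⟩
  obtain ⟨p, v, hy⟩ := exists_tdmLevC_inr_eq U y
  refine mem_of_card_filter_univ_le (P := fun c => tdmLevC U c p = Sum.inr v) (le_of_eq ?_) hy
  rw [card_filter_tdmLevC_eq_inr U hκ, ← hfb p (Sum.inr v), hS, card_filter_tdmLevT_eq_inr]
end

section
/- The integer program max ∑_{i_1,i_2} x_{i_1,i_2} subject to ∑_{i_2} x_{i_1,i_2} = ∑_{i_2} x'_{i_1,i_2} for all i_1, ∑_{i_1} x_{i_1,i_2} = ∑_{i_1} x'_{i_1,i_2} for all i_2, 0 ≤ x_{i_1,i_2} ≤ u_{i_1,i_2}, 0 ≤ x'_{i_1,i_2} ≤ u'_{i_1,i_2}, with integer variables, has optimal value equal to the maximum of |S| over all (S,S') satisfying the 2-covariate fine-balance constraints, where u_{i_1,i_2} = |L_{1,i_1} ∩ L_{2,i_2}| and u'_{i_1,i_2} = |L'_{1,i_1} ∩ L'_{2,i_2}|. -/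
/-!
The two sets of attainable values coincide. A fine-balanced pair `(S, S')` gives a feasible
point of the integer program by counting `S` and `S'` in each cell `L_{1,i₁} ∩ L_{2,i₂}`: the
row and column sums of these cell counts are the marginal counts that fine balance equates.
Conversely any feasible `x` within the cell capacities is realised by picking `x i₁ i₂` units
from each cell, and the pair obtained from `x` and `x'` is then fine-balanced.
-/

open Finset

theorem sum_card_filter_and_eq_left {α ι κ : Type*} [Fintype κ] [DecidableEq ι]
    [DecidableEq κ] (S : Finset α) (f : α → ι) (g : α → κ) (i : ι) :
    ∑ j, #{t ∈ S | f t = i ∧ g t = j} = #{t ∈ S | f t = i} := by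
  rw [card_eq_sum_card_fiberwise (f := g) (t := univ) fun _ _ => mem_univ _]
  simp only [filter_filter]

theorem sum_card_filter_and_eq_right {α ι κ : Type*} [Fintype ι] [DecidableEq ι]
    [DecidableEq κ] (S : Finset α) (f : α → ι) (g : α → κ) (j : κ) :
    ∑ i, #{t ∈ S | f t = i ∧ g t = j} = #{t ∈ S | g t = j} := by
  simp only [and_comm (a := f _ = _), sum_card_filter_and_eq_left]

theorem card_eq_sum_sum_card_filter_and {α ι κ : Type*} [Fintype ι] [Fintype κ]
    [DecidableEq ι] [DecidableEq κ] (S : Finset α) (f : α → ι) (g : α → κ) :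
    #S = ∑ i, ∑ j, #{t ∈ S | f t = i ∧ g t = j} := by
  simp only [sum_card_filter_and_eq_left]
  exact card_eq_sum_card_fiberwise fun _ _ => mem_univ _

theorem exists_subset_card_fiber_eq {α ι : Type*} [Fintype ι] [DecidableEq ι] (T : Finset α)
    (h : α → ι) (x : ι → ℕ) (hx : ∀ i, x i ≤ #{t ∈ T | h t = i}) :
    ∃ S ⊆ T, ∀ i, #{t ∈ S | h t = i} = x i := by
  classical
  choose U hUT hUcard using fun i => exists_subset_card_eq (hx i)
  have mem_U {i a} (ha : a ∈ U i) : a ∈ T ∧ h a = i := mem_filter.mp (hUT i ha)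
  refine ⟨univ.biUnion U, biUnion_subset.mpr fun i _ a ha => (mem_U ha).1, fun i => ?_⟩
  have fiber_eq : {t ∈ univ.biUnion U | h t = i} = U i := by
    ext a
    simp only [mem_filter, mem_biUnion, mem_univ, true_and]
    exact ⟨fun ⟨⟨j, ha⟩, hai⟩ => ((mem_U ha).2.symm.trans hai) ▸ ha,
      fun ha => ⟨⟨i, ha⟩, (mem_U ha).2⟩⟩
  rw [fiber_eq, hUcard]

theorem exists_subset_card_filter_and_eq {α ι κ : Type*} [Fintype ι] [Fintype κ]
    [DecidableEq ι] [DecidableEq κ] (T : Finset α) (f : α → ι) (g : α → κ)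
    (x : ι → κ → ℕ)     (hx : ∀ i j, x i j ≤ #{t ∈ T | f t = i ∧ g t = j}) :
    ∃ S ⊆ T, ∀ i j, #{t ∈ S | f t = i ∧ g t = j} = x i j := by
  obtain ⟨S, hST, hS⟩ := exists_subset_card_fiber_eq T (fun t => (f t, g t))
    (fun p => x p.1 p.2) fun p => by simpa only [Prod.ext_iff] using hx p.1 p.2
  exact ⟨S, hST, fun i j => by simpa only [Prod.ext_iff] using hS (i, j)⟩

/-- The optimal value of the 2-covariate FBS integer program (variables
`x`, `x'` with matching row and column sums and the level-intersection capacities) equals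
the maximum of `|S|` over all fine-balanced pairs `(S,S')`. -/
theorem stmt_7 {α β : Type*} (k1 k2 : ℕ) (T : Finset α) (C : Finset β)
    (levT1 : α → Fin k1) (levT2 : α → Fin k2)
    (levC1 : β → Fin k1) (levC2 : β → Fin k2) :
    sSup {m : ℕ | ∃ (x x' : Fin k1 → Fin k2 → ℕ),
      (∀ i1, ∑ i2, x i1 i2 = ∑ i2, x' i1 i2) ∧
      (∀ i2, ∑ i1, x i1 i2 = ∑ i1, x' i1 i2) ∧
      (∀ i1 i2, x i1 i2 ≤ (T.filter (fun t => levT1 t = i1 ∧ levT2 t = i2)).card) ∧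
      (∀ i1 i2, x' i1 i2 ≤ (C.filter (fun c => levC1 c = i1 ∧ levC2 c = i2)).card) ∧
      ∑ i1, ∑ i2, x i1 i2 = m}
    = sSup {m : ℕ | ∃ S ⊆ T, ∃ S' ⊆ C,
      (∀ i1, (S.filter (fun t => levT1 t = i1)).card
        = (S'.filter (fun c => levC1 c = i1)).card) ∧
      (∀ i2, (S.filter (fun t => levT2 t = i2)).card
        = (S'.filter (fun c => levC2 c = i2)).card) ∧
      S.card = m} := by
  congr 1
  ext m
  constructor
  · rintro ⟨x, x', hrow, hcol, hx, hx', rfl⟩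
    obtain ⟨S, hST, hS⟩ := exists_subset_card_filter_and_eq T levT1 levT2 x hx
    obtain ⟨S', hSC, hS'⟩ := exists_subset_card_filter_and_eq C levC1 levC2 x' hx'
    refine ⟨S, hST, S', hSC, fun i1 => ?_, fun i2 => ?_, ?_⟩
    · rw [← sum_card_filter_and_eq_left S levT1 levT2,
        ← sum_card_filter_and_eq_left S' levC1 levC2]
      simpa only [hS, hS'] using hrow i1
    · rw [← sum_card_filter_and_eq_right S levT1 levT2,
        ← sum_card_filter_and_eq_right S' levC1 levC2]
      simpa only [hS, hS'] using hcol i2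
    · simp only [card_eq_sum_sum_card_filter_and S levT1 levT2, hS]
  · rintro ⟨S, hST, S', hSC, hbal1, hbal2, rfl⟩
    refine ⟨fun i1 i2 => #{t ∈ S | levT1 t = i1 ∧ levT2 t = i2},
      fun i1 i2 => #{c ∈ S' | levC1 c = i1 ∧ levC2 c = i2}, fun i1 => ?_, fun i2 => ?_,
      fun i1 i2 => card_le_card (filter_subset_filter _ hST),
      fun i1 i2 => card_le_card (filter_subset_filter _ hSC),
      (card_eq_sum_sum_card_filter_and S levT1 levT2).symm⟩
    · simpa only [sum_card_filter_and_eq_left] using hbal1 i1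
    · simpa only [sum_card_filter_and_eq_right] using hbal2 i2
end

section
/- The exact 3-cover problem reduces to the 2-covariate κ-fine-balance selection problem for κ ≥ 3: for the constructed instance (covariate 1 levels indexed by C ∪ E, covariate 2 levels indexed by E ∪ {X}; treatment samples (T,X) for T ∈ C and (e',e'') for e ∈ E; control samples (T,e_{t_1}''),(T,e_{t_2}''),(T,e_{t_3}'') and κ−3 copies of (T,X) for each triplet T = {e_{t_1},e_{t_2},e_{t_3}} ∈ C, plus (e',X) and κ−1 copies of (e',e'') for each e ∈ E), there is a feasible pair (S,S') satisfying 2-covariate κ-fine-balance with |S| ≥ 4q if and only if there is a subcollection C' ⊆ C such that each element of E appears in exactly one triplet of C'. -/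
/-!
At a triplet level `T` there are exactly `κ` control samples, the three `(T, e'')` and the
`κ - 3` copies of `(T, X)`, so balance forces all or none of them to be chosen, according as
`T ∈ S`. Comparing the balance equations at `e'` and at `e''` then shows that `e` lies in one
chosen triplet if `e ∈ S` and in none otherwise. The chosen triplets are therefore disjoint and
cover exactly the chosen elements, which are three times as many; with `|S| ≥ 4q` this forces all
`3q` elements, hence an exact cover. Conversely, taking as treatments the triplets of an exact
cover and all of `E`, and as controls every sample at their levels, gives a balanced pair.
-/

open Finset

/-- Control samples of the exact-3-cover reduction: for each triplet `T ∈ C` the samples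
`(T, e'')` for `e ∈ T` and copies (indexed by `W3`, instantiated as `Fin (κ-3)`) of
`(T, X)`; and for each `e ∈ E` the sample `(e', X)` and copies (indexed by `W1`,
instantiated as `Fin (κ-1)`) of `(e', e'')`. -/
abbrev x3cCty (E : Type*) (Cc : Finset (Finset E)) (W3 W1 : Type*) :=
  {p : {T // T ∈ Cc} × E // p.2 ∈ p.1.1} ⊕ ({T // T ∈ Cc} × W3) ⊕ E ⊕ (E × W1)

/-- Covariate-1 level (an element of `C ⊕ E`) of a treatment sample. -/
def x3cLevT1 {E : Type*} {Cc : Finset (Finset E)} :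
    ({T // T ∈ Cc} ⊕ E) → ({T // T ∈ Cc} ⊕ E)
  | t => t

/-- Covariate-2 level (`none` is the level `X`) of a treatment sample. -/
def x3cLevT2 {E : Type*} {Cc : Finset (Finset E)} : ({T // T ∈ Cc} ⊕ E) → Option E
  | Sum.inl _ => none
  | Sum.inr e => some e

/-- Covariate-1 level of a control sample. -/
def x3cLevC1 {E : Type*} {Cc : Finset (Finset E)} {W3 W1 : Type*} :
    x3cCty E Cc W3 W1 → ({T // T ∈ Cc} ⊕ E)
  | Sum.inl p => Sum.inl p.1.1
  | Sum.inr (Sum.inl (T, _)) => Sum.inl T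
  | Sum.inr (Sum.inr (Sum.inl e)) => Sum.inr e
  | Sum.inr (Sum.inr (Sum.inr (e, _))) => Sum.inr e

/-- Covariate-2 level of a control sample. -/
def x3cLevC2 {E : Type*} {Cc : Finset (Finset E)} {W3 W1 : Type*} :
    x3cCty E Cc W3 W1 → Option E
  | Sum.inl p => some p.1.2
  | Sum.inr (Sum.inl _) => none
  | Sum.inr (Sum.inr (Sum.inl _)) => none
  | Sum.inr (Sum.inr (Sum.inr (e, _))) => some e

namespace Finset

variable {α β : Type*}

lemma card_filter_sum (s : Finset (α ⊕ β)) (p : α ⊕ β → Prop) [DecidablePred p] :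
    #{x ∈ s | p x} = #{a ∈ s.toLeft | p (.inl a)} + #{b ∈ s.toRight | p (.inr b)} := by
  rw [← card_toLeft_add_card_toRight]
  congr 2 <;> ext <;> simp

lemma card_filter_fst_eq_product [DecidableEq α] (s : Finset α) (t : Finset β) (a : α) :
    #{x ∈ s ×ˢ t | x.1 = a} = if a ∈ s then #t else 0 := by
  rw [filter_product_left (fun x => x = a), card_product, filter_eq']
  split_ifs <;> simp

lemma card_filter_eq_ite [DecidableEq α] (s : Finset α) (a : α) :
    #{x ∈ s | x = a} = if a ∈ s then 1 else 0 := by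
  rw [filter_eq']
  split_ifs <;> simp

lemma card_filter_fst_le [Fintype β] [DecidableEq α] (s : Finset (α × β)) (a : α) :
    #{x ∈ s | x.1 = a} ≤ Fintype.card β :=
  calc #{x ∈ s | x.1 = a} ≤ #({a} ×ˢ (univ : Finset β)) :=
        card_le_card fun x hx => by simp [(mem_filter.1 hx).2.symm]
    _ = Fintype.card β := by rw [card_product, card_singleton, one_mul, card_univ]

lemma card_eq_mul_card_of_card_filter_mem [DecidableEq α] {F : Finset (Finset α)} {U : Finset α}
    {k : ℕ} (hF : ∀ T ∈ F, #T = k) (hU : ∀ a, #{T ∈ F | a ∈ T} = if a ∈ U then 1 else 0) :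
    #U = k * #F := by
  have hsub : ∀ T ∈ F, U ∩ T = T := fun T hT => inter_eq_right.2 fun a ha => by
    by_contra haU
    have h := hU a
    rw [if_neg haU, card_eq_zero, filter_eq_empty_iff] at h
    exact h hT ha
  calc #U = ∑ T ∈ F, #(U ∩ T) := by
        rw [sum_card_inter (n := 1) fun a ha => by rw [hU, if_pos ha], mul_one]
    _ = ∑ T ∈ F, k := sum_congr rfl fun T hT => by rw [hsub T hT, hF T hT]
    _ = k * #F := by rw [sum_const, smul_eq_mul, mul_comm]

lemma existsUnique_of_card_filter_mem [Fintype α] [DecidableEq α] {k q : ℕ}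
    (hα : Fintype.card α = k * q) {F : Finset (Finset α)} {U : Finset α}
    (hF : ∀ T ∈ F, #T = k) (hU : ∀ a, #{T ∈ F | a ∈ T} = if a ∈ U then 1 else 0)
    (hcard : (k + 1) * q ≤ #F + #U) (a : α) : ∃! T, T ∈ F ∧ a ∈ T := by
  have hUF := card_eq_mul_card_of_card_filter_mem hF hU
  have hq : q ≤ #F := Nat.le_of_mul_le_mul_left (by rw [hUF] at hcard; linarith) k.succ_pos
  have hUuniv : U = univ :=
    eq_univ_of_card U (le_antisymm (card_le_univ U) (hα ▸ hUF ▸ Nat.mul_le_mul_left k hq))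
  have ha := hU a
  rw [hUuniv, if_pos (mem_univ a), card_eq_one_iff_existsUnique] at ha
  simpa only [mem_filter] using ha

end Finset

namespace X3CReduction

variable {E : Type*} {Cc : Finset (Finset E)} {W3 W1 : Type*}

abbrev Incidence (Cc : Finset (Finset E)) := {p : {T // T ∈ Cc} × E // p.2 ∈ p.1.1}

def FineBalanced [DecidableEq E] (κ : ℕ) (S : Finset ({T // T ∈ Cc} ⊕ E))
    (S' : Finset (x3cCty E Cc W3 W1)) : Prop :=
  (∀ v : {T // T ∈ Cc} ⊕ E,
    κ * #{t ∈ S | x3cLevT1 t = v} = #{c ∈ S' | x3cLevC1 c = v}) ∧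
  (∀ v : Option E, κ * #{t ∈ S | x3cLevT2 t = v} = #{c ∈ S' | x3cLevC2 c = v})

section LevelCounts

variable (S : Finset ({T // T ∈ Cc} ⊕ E)) (S' : Finset (x3cCty E Cc W3 W1))

lemma card_filter_levT2_none : #{t ∈ S | x3cLevT2 t = none} = #S.toLeft := by
  rw [card_filter_sum]
  simp [x3cLevT2]

lemma card_filter_levC2_none :
    #{c ∈ S' | x3cLevC2 c = none} = #S'.toRight.toLeft + #S'.toRight.toRight.toLeft := by
  rw [card_filter_sum, card_filter_sum S'.toRight, card_filter_sum S'.toRight.toRight]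
  simp [x3cLevC2]

variable [DecidableEq E]

lemma card_filter_levT1 (v : {T // T ∈ Cc} ⊕ E) :
    #{t ∈ S | x3cLevT1 t = v} = if v ∈ S then 1 else 0 :=
  card_filter_eq_ite S v

lemma card_filter_levT2_some (e : E) :
    #{t ∈ S | x3cLevT2 t = some e} = if .inr e ∈ S then 1 else 0 := by
  rw [card_filter_sum]
  simp [x3cLevT2, card_filter_eq_ite]

lemma card_filter_levC1_inl (T : {T // T ∈ Cc}) :
    #{c ∈ S' | x3cLevC1 c = .inl T}
      = #{p ∈ S'.toLeft | p.1.1 = T} + #{x ∈ S'.toRight.toLeft | x.1 = T} := by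
  rw [card_filter_sum, card_filter_sum S'.toRight, card_filter_sum S'.toRight.toRight]
  simp [x3cLevC1]

lemma card_filter_levC1_inr (e : E) :
    #{c ∈ S' | x3cLevC1 c = .inr e}
      = #{x ∈ S'.toRight.toRight.toLeft | x = e}
        + #{x ∈ S'.toRight.toRight.toRight | x.1 = e} := by
  rw [card_filter_sum, card_filter_sum S'.toRight, card_filter_sum S'.toRight.toRight]
  simp [x3cLevC1]

lemma card_filter_levC2_some (e : E) :
    #{c ∈ S' | x3cLevC2 c = some e}
      = #{p ∈ S'.toLeft | p.1.2 = e} + #{x ∈ S'.toRight.toRight.toRight | x.1 = e} := by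
  rw [card_filter_sum, card_filter_sum S'.toRight, card_filter_sum S'.toRight.toRight]
  simp [x3cLevC2]

end LevelCounts

section Incidence

variable [Fintype E] [DecidableEq E]

lemma card_filter_incidence_fst (T : {T // T ∈ Cc}) :
    #{p : Incidence Cc | p.1.1 = T} = #T.1 := by
  refine card_bij (fun p _ => p.1.2) (fun p hp => ?_) (fun p hp r hr h => ?_) (fun e he => ?_)
  · exact (mem_filter_univ _).1 hp ▸ p.2
  · rw [mem_filter_univ] at hp hr
    exact Subtype.ext (Prod.ext (hp.trans hr.symm) h)
  · exact ⟨⟨(T, e), he⟩, by simp, rfl⟩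

lemma card_filter_incidence_snd (F : Finset {T // T ∈ Cc}) (e : E) :
    #{p : Incidence Cc | p.1.1 ∈ F ∧ p.1.2 = e} = #{T ∈ F | e ∈ T.1} := by
  refine card_bij (fun p _ => p.1.1) (fun p hp => ?_) (fun p hp r hr h => ?_) (fun T hT => ?_)
  · obtain ⟨hpF, rfl⟩ := (mem_filter_univ _).1 hp
    exact mem_filter.2 ⟨hpF, p.2⟩
  · rw [mem_filter_univ] at hp hr
    exact Subtype.ext (Prod.ext h (hp.2.trans hr.2.symm))
  · obtain ⟨hTF, he⟩ := mem_filter.1 hT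
    exact ⟨⟨(T, e), he⟩, by simp [hTF], rfl⟩

end Incidence

section Forward

variable [Fintype E] [DecidableEq E] [Fintype W3] {κ : ℕ}
  {S : Finset ({T // T ∈ Cc} ⊕ E)} {S' : Finset (x3cCty E Cc W3 W1)}

lemma toLeft_eq_of_fineBalanced (hCc : ∀ T ∈ Cc, #T = 3) (hW3 : Fintype.card W3 + 3 ≤ κ)
    (h : FineBalanced κ S S') : S'.toLeft = ({p | p.1.1 ∈ S.toLeft} : Finset (Incidence Cc)) := by
  ext ⟨⟨T, e⟩, he⟩
  have hbal := h.1 (.inl T)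
  rw [card_filter_levT1, card_filter_levC1_inl] at hbal
  have hB := card_filter_fst_le S'.toRight.toLeft T
  have hsub : {r ∈ S'.toLeft | r.1.1 = T} ⊆ ({r | r.1.1 = T} : Finset (Incidence Cc)) :=
    filter_subset_filter _ (subset_univ _)
  have hfiber := card_filter_incidence_fst T
  rw [hCc T.1 T.2] at hfiber
  have hp : ⟨(T, e), he⟩ ∈ S'.toLeft ↔ ⟨(T, e), he⟩ ∈ {r ∈ S'.toLeft | r.1.1 = T} := by simp
  rw [hp, mem_filter_univ, mem_toLeft]
  by_cases hT : Sum.inl T ∈ S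
  · rw [if_pos hT] at hbal
    rw [eq_of_subset_of_card_le hsub (by omega)]
    simpa using hT
  · rw [if_neg hT] at hbal
    rw [card_eq_zero.1 (by omega : #{r ∈ S'.toLeft | r.1.1 = T} = 0)]
    simpa using hT

lemma card_filter_mem_toLeft_of_fineBalanced [Fintype W1] (hCc : ∀ T ∈ Cc, #T = 3)
    (hW3 : Fintype.card W3 + 3 ≤ κ) (hW1 : Fintype.card W1 + 1 ≤ κ) (h : FineBalanced κ S S')
    (e : E) : #{T ∈ S.toLeft | e ∈ T.1} = if .inr e ∈ S then 1 else 0 := by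
  have h1 := h.1 (.inr e)
  have h2 := h.2 (some e)
  rw [card_filter_levT1, card_filter_levC1_inr, card_filter_eq_ite] at h1
  rw [card_filter_levT2_some, card_filter_levC2_some, toLeft_eq_of_fineBalanced hCc hW3 h,
    filter_filter, card_filter_incidence_snd] at h2
  have hD := card_filter_fst_le S'.toRight.toRight.toRight e
  split_ifs at h1 h2 ⊢ <;> omega

theorem exists_exactCover_of_fineBalanced [Fintype W1] {q : ℕ} (hE : Fintype.card E = 3 * q)
    (hCc : ∀ T ∈ Cc, #T = 3) (hW3 : Fintype.card W3 + 3 ≤ κ) (hW1 : Fintype.card W1 + 1 ≤ κ)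
    (h : FineBalanced κ S S') (hS : 4 * q ≤ #S) : ∃ C' ⊆ Cc, ∀ e : E, ∃! T, T ∈ C' ∧ e ∈ T := by
  refine ⟨S.toLeft.map (.subtype _), fun T hT => ?_, fun e => ?_⟩
  · obtain ⟨T, -, rfl⟩ := mem_map.1 hT
    exact T.2
  refine existsUnique_of_card_filter_mem hE (U := S.toRight) (fun T hT => ?_) (fun e => ?_) ?_ e
  · obtain ⟨T, -, rfl⟩ := mem_map.1 hT
    exact hCc T.1 T.2
  · rw [filter_map, card_map]
    convert card_filter_mem_toLeft_of_fineBalanced hCc hW3 hW1 h e using 2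
    · rfl
    · exact mem_toRight
  · rw [card_map, card_toLeft_add_card_toRight]
    omega

end Forward

section Backward

variable [Fintype E] [DecidableEq E] [Fintype W3] [Fintype W1] {κ : ℕ}

def controlsOfCover (F : Finset {T // T ∈ Cc}) : Finset (x3cCty E Cc W3 W1) :=
  ({p | p.1.1 ∈ F} : Finset (Incidence Cc)).disjSum ((F ×ˢ univ).disjSum (univ.disjSum univ))

lemma fineBalanced_controlsOfCover (hCc : ∀ T ∈ Cc, #T = 3)
    (hW3 : Fintype.card W3 + 3 = κ) (hW1 : Fintype.card W1 + 1 = κ)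
    {F : Finset {T // T ∈ Cc}} (hF : ∀ e, #{T ∈ F | e ∈ T.1} = 1)
    (hFcard : Fintype.card E = 3 * #F) :
    FineBalanced κ (F.disjSum univ) (controlsOfCover F : Finset (x3cCty E Cc W3 W1)) := by
  constructor
  · rintro (T | e)
    · rw [card_filter_levT1, card_filter_levC1_inl]
      simp only [controlsOfCover, toLeft_disjSum, toRight_disjSum, inl_mem_disjSum, filter_filter,
        card_filter_fst_eq_product]
      by_cases hT : T ∈ F
      · rw [filter_congr (q := fun p : Incidence Cc => p.1.1 = T) fun p _ =>
          ⟨And.right, fun h => ⟨h ▸ hT, h⟩⟩, card_filter_incidence_fst, hCc T.1 T.2]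
        rw [if_pos hT, if_pos hT, mul_one, card_univ]
        omega
      · have hempty : ({p | p.1.1 ∈ F ∧ p.1.1 = T} : Finset (Incidence Cc)) = ∅ :=
          filter_eq_empty_iff.2 fun p _ h => hT (h.2 ▸ h.1)
        simp [hT, hempty]
    · rw [card_filter_levT1, card_filter_levC1_inr]
      simp only [controlsOfCover, toLeft_disjSum, toRight_disjSum, inr_mem_disjSum, mem_univ,
        card_filter_eq_ite, ← univ_product_univ, card_filter_fst_eq_product, if_true, card_univ]
      omega
  · rintro (_ | e)
    · rw [card_filter_levT2_none, card_filter_levC2_none]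
      simp only [controlsOfCover, toLeft_disjSum, toRight_disjSum, univ_disjSum_univ, toLeft_univ,
        card_product, card_univ, hFcard, ← hW3]
      ring
    · rw [card_filter_levT2_some, card_filter_levC2_some]
      simp only [controlsOfCover, toLeft_disjSum, toRight_disjSum, inr_mem_disjSum, filter_filter,
        card_filter_incidence_snd, hF, ← univ_product_univ, card_filter_fst_eq_product]
      simp only [mem_univ, if_true, card_univ]
      omega

theorem exists_fineBalanced_of_exactCover {q : ℕ} (hE : Fintype.card E = 3 * q)
    (hCc : ∀ T ∈ Cc, #T = 3) (hW3 : Fintype.card W3 + 3 = κ) (hW1 : Fintype.card W1 + 1 = κ)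
    {C' : Finset (Finset E)} (hC' : C' ⊆ Cc) (hcover : ∀ e, ∃! T, T ∈ C' ∧ e ∈ T) :
    ∃ (S : Finset ({T // T ∈ Cc} ⊕ E)) (S' : Finset (x3cCty E Cc W3 W1)),
      FineBalanced κ S S' ∧ 4 * q ≤ #S := by
  set F := C'.subtype (· ∈ Cc)
  have hFmap : F.map (.subtype _) = C' := subtype_map_of_mem hC'
  have hcount : ∀ e, #{T ∈ C' | e ∈ T} = 1 := fun e =>
    card_eq_one_iff_existsUnique.2 (by simpa using hcover e)
  have hC'card : Fintype.card E = 3 * #C' := by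
    rw [← card_univ]
    exact card_eq_mul_card_of_card_filter_mem (fun T hT => hCc T (hC' hT))
      (by simpa using hcount)
  have hF : ∀ e, #{T ∈ F | e ∈ T.1} = 1 := by
    intro e
    rw [← hcount e, ← hFmap, filter_map, card_map]
    rfl
  have hFcard : #F = #C' := by rw [← hFmap, card_map]
  refine ⟨F.disjSum univ, controlsOfCover F,
    fineBalanced_controlsOfCover hCc hW3 hW1 hF (by omega), ?_⟩
  rw [card_disjSum, card_univ]
  omega

end Backward

end X3CReduction

/-- Exact 3-cover reduces to the 2-covariate κ-FBS problem for `κ ≥ 3`: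
the constructed instance has a κ-fine-balanced pair `(S,S')` with `|S| ≥ 4q` iff
there is an exact 3-cover `C' ⊆ C`. -/
theorem stmt_9 {E : Type*} [Fintype E] [DecidableEq E] (q : ℕ)
    (hE : Fintype.card E = 3 * q)
    (Cc : Finset (Finset E)) (hCc : ∀ T ∈ Cc, T.card = 3)
    (κ : ℕ) (hκ : 3 ≤ κ) :
    (∃ (S : Finset ({T // T ∈ Cc} ⊕ E))
       (S' : Finset (x3cCty E Cc (Fin (κ - 3)) (Fin (κ - 1)))),
       (∀ v : {T // T ∈ Cc} ⊕ E,
         κ * (S.filter (fun t => x3cLevT1 t = v)).card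
           = (S'.filter (fun c => x3cLevC1 c = v)).card) ∧
       (∀ v : Option E,
         κ * (S.filter (fun t => x3cLevT2 t = v)).card
           = (S'.filter (fun c => x3cLevC2 c = v)).card) ∧
       4 * q ≤ S.card)
    ↔ ∃ C' ⊆ Cc, ∀ e : E, ∃! T, T ∈ C' ∧ e ∈ T := by
  have hW3 : Fintype.card (Fin (κ - 3)) + 3 = κ := by rw [Fintype.card_fin]; omega
  have hW1 : Fintype.card (Fin (κ - 1)) + 1 = κ := by rw [Fintype.card_fin]; omega
  constructor
  · rintro ⟨S, S', h1, h2, hS⟩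
    exact X3CReduction.exists_exactCover_of_fineBalanced hE hCc hW3.le hW1.le ⟨h1, h2⟩ hS
  · rintro ⟨C', hC', hcover⟩
    obtain ⟨S, S', ⟨h1, h2⟩, hS⟩ :=
      X3CReduction.exists_fineBalanced_of_exactCover hE hCc hW3 hW1 hC' hcover
    exact ⟨S, S', h1, h2, hS⟩
end

section
/- In the variable gadget of the 3-SAT reduction to the 2-covariate balanced matching problem, there are exactly two zero-distance perfect matchings: either e_i is matched to a_i for i = 0,...,q_j−1 and f_i to d_i for i = 1,...,p_j−1 (leaving all b_i and c_i unmatched), or f_i is matched to c_i for i = 0,...,p_j−1 and e_i to b_i for i = 1,...,q_j−1 (leaving all a_i and d_i unmatched), given the constraint that exactly one control sample is matched from each of the pairs {a_i, b_{i+1}} (i = 0,...,q_j−2), {c_i, d_{i+1}} (i = 0,...,p_j−2), and {a_{q_j−1}, c_{p_j−1}}. -/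
open Set

/-- Zero-distance pairs in the variable gadget for a variable with `pp+1` positive and
`qq+1` negative occurrences.  Treatment samples: `Sum.inl i = eᵢ` (with `e₀ = f₀`) and
`Sum.inr w = f_{w+1}`.  Control samples: `Sum.inl i = aᵢ`, `Sum.inr (Sum.inl w) = b_{w+1}`,
`Sum.inr (Sum.inr (Sum.inl j)) = c_j`, `Sum.inr (Sum.inr (Sum.inr w)) = d_{w+1}`. -/
def gadgetZero {qq pp : ℕ} :
    (Fin (qq + 1) ⊕ Fin pp) →
    (Fin (qq + 1) ⊕ (Fin qq ⊕ (Fin (pp + 1) ⊕ Fin pp))) → Prop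
  | Sum.inl i, Sum.inl i' => i = i'                                  -- eᵢ – aᵢ
  | Sum.inl i, Sum.inr (Sum.inl w) => i = w.succ                     -- e_{w+1} – b_{w+1}
  | Sum.inl i, Sum.inr (Sum.inr (Sum.inl j)) => i = 0 ∧ j = 0        -- e₀ = f₀ – c₀
  | Sum.inr w, Sum.inr (Sum.inr (Sum.inl j)) => j = w.succ           -- f_{w+1} – c_{w+1}
  | Sum.inr w, Sum.inr (Sum.inr (Sum.inr w')) => w = w'              -- f_{w+1} – d_{w+1}
  | _, _ => False

/- Every treatment sample other than `e₀ = f₀` has only two zero-distance partners and every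
control sample has only one, so whether a control sample is matched is decided by a single
treatment sample. Hence the XOR constraints propagate along the two chains: `a₀, …, a_{q-1}` are
either all matched or all unmatched, and so are `c₀, …, c_{p-1}`. The constraint on
`{a_{q-1}, c_{p-1}}` makes the two chains take opposite values, and the partner of `e₀ = f₀`
(`a₀` or `c₀`) decides which of the two matchings we get. -/

theorem Fin.iff_zero_of_forall_castSucc_iff_succ {n : ℕ} {P : Fin (n + 1) → Prop}
    (h : ∀ w : Fin n, P w.castSucc ↔ P w.succ) (i : Fin (n + 1)) : P i ↔ P 0 :=
  Fin.induction Iff.rfl (fun w ih => (h w).symm.trans ih) i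

theorem Set.mem_range_iff_notMem_range_of_eq_or_eq {α β : Type*} {m : α → β} {t : α} {x y : β}
    (hxy : x ≠ y) (hx : x ∈ range m → m t = x) (hy : y ∈ range m → m t = y)
    (ht : m t = x ∨ m t = y) : x ∈ range m ↔ y ∉ range m :=
  ⟨fun hxm hym => hxy ((hx hxm).symm.trans (hy hym)),
    fun hym => ht.elim (fun htx => ⟨t, htx⟩) fun hty => absurd ⟨t, hty⟩ hym⟩

namespace gadgetZero

variable {qq pp : ℕ}

theorem eq_of_inl {t : Fin (qq + 1) ⊕ Fin pp} {i : Fin (qq + 1)}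
    (h : gadgetZero t (.inl i)) : t = .inl i := by
  rcases t with i' | w <;> simp_all [gadgetZero]

theorem eq_of_inr_inl {t : Fin (qq + 1) ⊕ Fin pp} {w : Fin qq}
    (h : gadgetZero t (.inr (.inl w))) : t = .inl w.succ := by
  rcases t with i' | w' <;> simp_all [gadgetZero]

theorem eq_of_inr_inr_inl_succ {t : Fin (qq + 1) ⊕ Fin pp} {w : Fin pp}
    (h : gadgetZero t (.inr (.inr (.inl w.succ)))) : t = .inr w := by
  rcases t with i' | w' <;> simp_all [gadgetZero]

theorem eq_of_inr_inr_inr {t : Fin (qq + 1) ⊕ Fin pp} {w : Fin pp}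
    (h : gadgetZero t (.inr (.inr (.inr w)))) : t = .inr w := by
  rcases t with i' | w' <;> simp_all [gadgetZero]

theorem eq_or_eq_of_inl_zero {y : Fin (qq + 1) ⊕ (Fin qq ⊕ (Fin (pp + 1) ⊕ Fin pp))}
    (h : gadgetZero (.inl 0) y) : y = .inl 0 ∨ y = .inr (.inr (.inl 0)) := by
  rcases y with i | w | j | w <;> simp_all [gadgetZero, eq_comm]

theorem eq_or_eq_of_inl_succ {w : Fin qq}
    {y : Fin (qq + 1) ⊕ (Fin qq ⊕ (Fin (pp + 1) ⊕ Fin pp))}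
    (h : gadgetZero (.inl w.succ) y) : y = .inl w.succ ∨ y = .inr (.inl w) := by
  rcases y with i | w' | j | w' <;> simp_all [gadgetZero]

theorem eq_or_eq_of_inr {w : Fin pp}
    {y : Fin (qq + 1) ⊕ (Fin qq ⊕ (Fin (pp + 1) ⊕ Fin pp))}
    (h : gadgetZero (.inr w) y) : y = .inr (.inr (.inl w.succ)) ∨ y = .inr (.inr (.inr w)) := by
  rcases y with i | w' | j | w' <;> simp_all [gadgetZero]

variable {m : (Fin (qq + 1) ⊕ Fin pp) → (Fin (qq + 1) ⊕ (Fin qq ⊕ (Fin (pp + 1) ⊕ Fin pp)))}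

theorem apply_eq_of_mem_range (hzero : ∀ t, gadgetZero t (m t)) {s : Fin (qq + 1) ⊕ Fin pp}
    {y : Fin (qq + 1) ⊕ (Fin qq ⊕ (Fin (pp + 1) ⊕ Fin pp))} (hy : ∀ t, gadgetZero t y → t = s) :
    y ∈ range m → m s = y := by
  rintro ⟨t, rfl⟩
  rw [hy t (hzero t)]

theorem mem_range_inl_castSucc_iff (hzero : ∀ t, gadgetZero t (m t)) {w : Fin qq}
    (hab : Xor (.inl w.castSucc ∈ range m) (.inr (.inl w) ∈ range m)) :
    .inl w.castSucc ∈ range m ↔ .inl w.succ ∈ range m :=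
  (xor_iff_iff_not.1 hab).trans <| (mem_range_iff_notMem_range_of_eq_or_eq (by simp)
    (apply_eq_of_mem_range hzero fun _ => eq_of_inl)
    (apply_eq_of_mem_range hzero fun _ => eq_of_inr_inl) (hzero _).eq_or_eq_of_inl_succ).symm

theorem mem_range_inr_inr_inl_castSucc_iff (hzero : ∀ t, gadgetZero t (m t)) {w : Fin pp}
    (hcd : Xor (.inr (.inr (.inl w.castSucc)) ∈ range m) (.inr (.inr (.inr w)) ∈ range m)) :
    .inr (.inr (.inl w.castSucc)) ∈ range m ↔ .inr (.inr (.inl w.succ)) ∈ range m :=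
  (xor_iff_iff_not.1 hcd).trans <| (mem_range_iff_notMem_range_of_eq_or_eq (by simp)
    (apply_eq_of_mem_range hzero fun _ => eq_of_inr_inr_inl_succ)
    (apply_eq_of_mem_range hzero fun _ => eq_of_inr_inr_inr) (hzero _).eq_or_eq_of_inr).symm

end gadgetZero

open gadgetZero

theorem stmt_11_general (qq pp : ℕ)
    (m : (Fin (qq + 1) ⊕ Fin pp) →
         (Fin (qq + 1) ⊕ (Fin qq ⊕ (Fin (pp + 1) ⊕ Fin pp))))
    (hzero : ∀ t, gadgetZero t (m t))
    (hab : ∀ w : Fin qq,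
      Xor' (∃ t, m t = Sum.inl w.castSucc) (∃ t, m t = Sum.inr (Sum.inl w)))
    (hcd : ∀ w : Fin pp,
      Xor' (∃ t, m t = Sum.inr (Sum.inr (Sum.inl w.castSucc)))
           (∃ t, m t = Sum.inr (Sum.inr (Sum.inr w))))
    (hac : Xor' (∃ t, m t = Sum.inl (Fin.last qq))
                (∃ t, m t = Sum.inr (Sum.inr (Sum.inl (Fin.last pp))))) :
    ((∀ i : Fin (qq + 1), m (Sum.inl i) = Sum.inl i) ∧
     (∀ w : Fin pp, m (Sum.inr w) = Sum.inr (Sum.inr (Sum.inr w)))) ∨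
    (m (Sum.inl 0) = Sum.inr (Sum.inr (Sum.inl 0)) ∧
     (∀ w : Fin qq, m (Sum.inl w.succ) = Sum.inr (Sum.inl w)) ∧
     (∀ w : Fin pp, m (Sum.inr w) = Sum.inr (Sum.inr (Sum.inl w.succ)))) := by
  have hA : ∀ i, .inl i ∈ range m ↔ .inl 0 ∈ range m :=
    Fin.iff_zero_of_forall_castSucc_iff_succ fun w => mem_range_inl_castSucc_iff hzero (hab w)
  have hC : ∀ j, .inr (.inr (.inl j)) ∈ range m ↔ .inr (.inr (.inl 0)) ∈ range m :=
    Fin.iff_zero_of_forall_castSucc_iff_succ fun w =>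
      mem_range_inr_inr_inl_castSucc_iff hzero (hcd w)
  have hac_iff := xor_iff_iff_not.1 hac
  rcases (hzero (.inl 0)).eq_or_eq_of_inl_zero with h0 | h0
  · have ha : ∀ i, .inl i ∈ range m := fun i => (hA i).2 ⟨_, h0⟩
    have hc : ∀ j, .inr (.inr (.inl j)) ∉ range m := fun j hj =>
      hac_iff.1 (ha _) ((hC _).2 ((hC j).1 hj))
    exact .inl ⟨fun i => apply_eq_of_mem_range hzero (fun _ => eq_of_inl) (ha i),
      fun w => (hzero _).eq_or_eq_of_inr.resolve_left fun h => hc _ ⟨_, h⟩⟩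
  · have hc : ∀ j, .inr (.inr (.inl j)) ∈ range m := fun j => (hC j).2 ⟨_, h0⟩
    have ha : ∀ i, .inl i ∉ range m := fun i hi =>
      hac_iff.1 ((hA _).2 ((hA i).1 hi)) (hc _)
    exact .inr ⟨h0, fun w => (hzero _).eq_or_eq_of_inl_succ.resolve_left (fun h => ha _ ⟨_, h⟩),
      fun w => apply_eq_of_mem_range hzero (fun _ => eq_of_inr_inr_inl_succ) (hc _)⟩

/-- In the variable gadget of the 3-SAT reduction there are exactly two
zero-distance matchings: either every `eᵢ` is matched to `aᵢ` and every `f_{w+1}` to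
`d_{w+1}`, or `e₀ = f₀` is matched to `c₀`, every `f_{w+1}` to `c_{w+1}` and every
`e_{w+1}` to `b_{w+1}`. -/
theorem stmt_11 (qq pp : ℕ)
    (m : (Fin (qq + 1) ⊕ Fin pp) →
         (Fin (qq + 1) ⊕ (Fin qq ⊕ (Fin (pp + 1) ⊕ Fin pp))))
    (hinj : Function.Injective m)
    (hzero : ∀ t, gadgetZero t (m t))
    (hab : ∀ w : Fin qq,
      Xor' (∃ t, m t = Sum.inl w.castSucc) (∃ t, m t = Sum.inr (Sum.inl w)))
    (hcd : ∀ w : Fin pp,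
      Xor' (∃ t, m t = Sum.inr (Sum.inr (Sum.inl w.castSucc)))
           (∃ t, m t = Sum.inr (Sum.inr (Sum.inr w))))
    (hac : Xor' (∃ t, m t = Sum.inl (Fin.last qq))
                (∃ t, m t = Sum.inr (Sum.inr (Sum.inl (Fin.last pp))))) :
    ((∀ i : Fin (qq + 1), m (Sum.inl i) = Sum.inl i) ∧
     (∀ w : Fin pp, m (Sum.inr w) = Sum.inr (Sum.inr (Sum.inr w)))) ∨
    (m (Sum.inl 0) = Sum.inr (Sum.inr (Sum.inl 0)) ∧
     (∀ w : Fin qq, m (Sum.inl w.succ) = Sum.inr (Sum.inl w)) ∧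
     (∀ w : Fin pp, m (Sum.inr w) = Sum.inr (Sum.inr (Sum.inl w.succ)))) :=
  stmt_11_general qq pp m hzero hab hcd hac
end

section
/- The Exact-3-cover problem reduces to the 1-covariate (single-level) κ-MSBM problem for κ ≥ 3: construct one treatment sample per triplet T ∈ C, one control sample per element e ∈ E, and (κ−3)·q dummy control samples; the distance from the treatment sample of triplet T to a control sample is 0 if the control sample is a dummy or an element of T, and 1 otherwise. Then there exists a selection of q treatment samples and an assignment of each selected treatment sample to κ distinct control samples covering all |E| + (κ−3)q control samples with total distance 0, if and only if there is a subcollection C' ⊆ C with |C'| = q such that each element of E appears in exactly one triplet of C'. -/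
/-!
A zero-distance matching assigns every element `e` to a selected triplet containing it. The `q`
selected triplets have `3q = |E|` elements in total and every element lies in the triplet it is
matched to, so no element lies in a second selected triplet: they form an exact cover.
Conversely, an exact cover matches each element to its unique triplet, and the `(κ - 3)q` dummies
are spread evenly, `κ - 3` to each selected triplet.
-/

open Finset

/-- The fibres of `g` over `S` partition `α` and sit inside the sets `t b`; the size bound forces
each fibre to be all of `t b`. -/
theorem eq_of_mem_of_sum_card_le {α β : Type*} [Fintype α] [DecidableEq β] {g : α → β}
    {S : Finset β} {t : β → Finset α} (hgS : ∀ x, g x ∈ S) (hg : ∀ x, x ∈ t (g x))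
    (hcard : ∑ b ∈ S, #(t b) ≤ Fintype.card α) {b : β} (hb : b ∈ S) {x : α}
    (hx : x ∈ t b) : g x = b := by
  have hsub : ∀ b ∈ S, ({y | g y = b} : Finset α) ⊆ t b := by
    intro b _ y hy
    rw [← (mem_filter.1 hy).2]
    exact hg y
  have hsum : ∑ b ∈ S, #{y | g y = b} = ∑ b ∈ S, #(t b) := by
    refine le_antisymm (sum_le_sum fun b hb => card_le_card (hsub b hb)) ?_
    rwa [← card_eq_sum_card_fiberwise fun y _ => hgS y]
  have hfibre : ({y | g y = b} : Finset α) = t b :=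
    eq_of_subset_of_card_le (hsub b hb)
      ((sum_eq_sum_iff_of_le fun b hb => card_le_card (hsub b hb)).1 hsum b hb).ge
  rw [← hfibre] at hx
  exact (mem_filter.1 hx).2

theorem exists_forall_mem_forall_card_fiber_eq {β : Type*} [DecidableEq β] (S : Finset β)
    (m : ℕ) {n : ℕ} (hS : #S = n) :
    ∃ d : Fin (m * n) → β, (∀ i, d i ∈ S) ∧ ∀ b ∈ S, #{i | d i = b} = m := by
  let e := S.equivFinOfCardEq hS
  refine ⟨fun i => e.symm i.modNat, fun i => coe_mem _, fun b hb => ?_⟩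
  have hfibre : ({i | (e.symm i.modNat : β) = b} : Finset (Fin (m * n)))
      = (univ ×ˢ {e ⟨b, hb⟩}).map finProdFinEquiv.toEmbedding := by
    ext i
    simpa [eq_comm (a := e _)] using Subtype.ext_iff.symm.trans (e.symm_apply_eq (y := ⟨b, hb⟩))
  simp [hfibre]

theorem card_filter_sumElim_eq {α β γ : Type*} [Fintype α] [Fintype β] [DecidableEq γ]
    (g : α → γ) (d : β → γ) (c : γ) :
    #{x | Sum.elim g d x = c} = #{a | g a = c} + #{i | d i = c} := by
  rw [card_filter, card_filter, card_filter, Fintype.sum_sum_type]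
  rfl

section

variable {E : Type*} [Fintype E] [DecidableEq E] {q : ℕ} {Cc : Finset (Finset E)}

theorem exists_exactCover_of_matching (hE : Fintype.card E = 3 * q)
    (hCc : ∀ T ∈ Cc, #T = 3) (S : Finset {T // T ∈ Cc}) (hS : #S = q)
    (f : E → {T // T ∈ Cc}) (hfS : ∀ e, f e ∈ S) (hf : ∀ e, e ∈ (f e).1) :
    ∃ C' ⊆ Cc, #C' = q ∧ ∀ e : E, ∃! T, T ∈ C' ∧ e ∈ T := by
  have hcard : ∑ s ∈ S, #(s : Finset E) ≤ Fintype.card E := by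
    rw [sum_congr rfl fun (s : {T // T ∈ Cc}) _ => hCc s.1 s.2, sum_const, hS, hE, smul_eq_mul,
      mul_comm]
  refine ⟨S.map (Function.Embedding.subtype _), fun T hT => ?_, by rw [card_map, hS],
    fun e => ⟨f e, ⟨mem_map_of_mem _ (hfS e), hf e⟩, ?_⟩⟩
  · obtain ⟨s, -, rfl⟩ := mem_map.1 hT
    exact s.2
  · rintro T ⟨hT, heT⟩
    obtain ⟨s, hs, rfl⟩ := mem_map.1 hT
    rw [eq_of_mem_of_sum_card_le hfS hf hcard hs heT]
    rfl

theorem exists_matching_of_exactCover (hCc : ∀ T ∈ Cc, #T = 3) {κ : ℕ} (hκ : 3 ≤ κ)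
    {C' : Finset (Finset E)} (hC' : C' ⊆ Cc) (hq : #C' = q)
    (hcov : ∀ e : E, ∃! T, T ∈ C' ∧ e ∈ T) :
    ∃ (S : Finset {T // T ∈ Cc}) (f : (E ⊕ Fin ((κ - 3) * q)) → {T // T ∈ Cc}),
      #S = q ∧ (∀ c, f c ∈ S) ∧ (∀ s ∈ S, #{c | f c = s} = κ) ∧
      ∀ e : E, e ∈ (f (Sum.inl e)).1 := by
  let S : Finset {T // T ∈ Cc} := C'.subtype (· ∈ Cc)
  have hmemS (s : {T // T ∈ Cc}) : s ∈ S ↔ s.1 ∈ C' := mem_subtype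
  have hS : #S = q := by rw [card_subtype, filter_true_of_mem hC', hq]
  have hcovS (e : E) : ∃ s ∈ S, e ∈ s.1 :=
    let ⟨T, ⟨hT, heT⟩, _⟩ := hcov e
    ⟨⟨T, hC' hT⟩, (hmemS _).2 hT, heT⟩
  choose g hgS hg using hcovS
  obtain ⟨d, hdS, hd⟩ := exists_forall_mem_forall_card_fiber_eq S (κ - 3) hS
  refine ⟨S, Sum.elim g d, hS, ?_, fun s hs => ?_, hg⟩
  · rintro (e | i)
    exacts [hgS e, hdS i]
  · have hgfibre : ({e | g e = s} : Finset E) = s.1 := by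
      ext e
      simp only [mem_filter, mem_univ, true_and]
      exact ⟨fun h => h ▸ hg e, fun he => Subtype.ext <|
        (hcov e).unique ⟨(hmemS _).1 (hgS e), hg e⟩ ⟨(hmemS s).1 hs, he⟩⟩
    rw [card_filter_sumElim_eq, hgfibre, hCc s s.2, hd s hs]
    omega

end

/-- Exact-3-cover reduces to the single-level 1-covariate κ-MSBM problem
(κ ≥ 3).  Treatment samples are the triplets of `C`, control samples are the elements of
`E` together with `(κ-3)·q` dummies; a matching is modeled by `f` sending each control
sample to the selected treatment sample it is matched with; zero total distance means
each element control sample is matched to a triplet containing it. -/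
theorem stmt_12 {E : Type*} [Fintype E] [DecidableEq E] (q : ℕ)
    (hE : Fintype.card E = 3 * q)
    (Cc : Finset (Finset E)) (hCc : ∀ T ∈ Cc, T.card = 3)
    (κ : ℕ) (hκ : 3 ≤ κ) :
    (∃ (S : Finset {T // T ∈ Cc})
       (f : (E ⊕ Fin ((κ - 3) * q)) → {T // T ∈ Cc}),
       S.card = q ∧
       (∀ c, f c ∈ S) ∧
       (∀ s ∈ S, (Finset.univ.filter (fun c : E ⊕ Fin ((κ - 3) * q) => f c = s)).card = κ) ∧
       (∀ e : E, e ∈ (f (Sum.inl e)).1))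
    ↔ ∃ C' ⊆ Cc, C'.card = q ∧ ∀ e : E, ∃! T, T ∈ C' ∧ e ∈ T := by
  constructor
  · rintro ⟨S, f, hS, hfS, -, hf⟩
    exact exists_exactCover_of_matching hE hCc S hS (f ∘ Sum.inl) (fun e => hfS _) hf
  · rintro ⟨C', hC', hq, hcov⟩
    exact exists_matching_of_exactCover hCc hκ hC' hq hcov
end

section
/- In the Exact-3-cover reduction to single-level κ-MSBM (κ ≥ 3), any zero-distance solution matches every selected treatment sample to exactly κ−3 dummy control samples and exactly 3 element control samples: if q treatment samples are each matched to κ distinct control samples, all |E| + (κ−3)q control samples are matched, and every matched pair has distance 0, then every selected treatment sample (triplet T) is matched to exactly the 3 control samples corresponding to the elements of T plus κ−3 dummy samples. -/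
open Finset

/-!
Every element `e` is matched to a triplet containing it, so the fibre of a selected triplet `s`
among the element samples is contained in `s` and has at most 3 elements. These `q` fibres
partition the `3q` elements, so each has exactly 3 elements and equals `s`; the remaining
`κ - 3` samples matched to `s` are then dummies.
-/

theorem Finset.card_filter_univ_sum {α β : Type*} [Fintype α] [Fintype β]
    (p : α ⊕ β → Prop) [DecidablePred p] :
    #{c | p c} = #{a | p (Sum.inl a)} + #{b | p (Sum.inr b)} := by
  rw [← card_toLeft_add_card_toRight]
  congr 2 <;> ext <;> simp

theorem Finset.filter_eq_of_mem_of_card_eq_mul {α β : Type*} [Fintype α] [DecidableEq β]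
    (g : α → β) (S : Finset β) (B : β → Finset α) (k : ℕ)
    (hg : ∀ a, g a ∈ S) (hB : ∀ a, a ∈ B (g a)) (hBcard : ∀ s ∈ S, #(B s) = k)
    (hcard : Fintype.card α = k * #S) :
    ∀ s ∈ S, ({a | g a = s} : Finset α) = B s := by
  have hsub : ∀ s, ({a | g a = s} : Finset α) ⊆ B s := by
    intro s a ha
    rw [(mem_filter.mp ha).2.symm]
    exact hB a
  have hsum : ∑ s ∈ S, #{a | g a = s} = ∑ s ∈ S, #(B s) := by
    rw [← card_eq_sum_card_fiberwise (fun a _ => hg a), card_univ, hcard,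
      sum_congr rfl hBcard, sum_const, smul_eq_mul, mul_comm]
  have hcard_eq := (sum_eq_sum_iff_of_le fun s _ => card_le_card (hsub s)).mp hsum
  exact fun s hs => eq_of_subset_of_card_le (hsub s) (hcard_eq s hs).ge

theorem stmt_13_general {E : Type*} [Fintype E] [DecidableEq E] (q : ℕ)
    (hE : Fintype.card E = 3 * q)
    (Cc : Finset (Finset E)) (hCc : ∀ T ∈ Cc, T.card = 3)
    (κ : ℕ)
    (S : Finset {T // T ∈ Cc})
    (f : (E ⊕ Fin ((κ - 3) * q)) → {T // T ∈ Cc})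
    (hScard : S.card = q)
    (hrange : ∀ c, f c ∈ S)
    (hcount : ∀ s ∈ S,
      (Finset.univ.filter (fun c : E ⊕ Fin ((κ - 3) * q) => f c = s)).card = κ)
    (hzero : ∀ e : E, e ∈ (f (Sum.inl e)).1) :
    (∀ s ∈ S, ∀ e : E, f (Sum.inl e) = s ↔ e ∈ s.1) ∧
    (∀ s ∈ S,
      (Finset.univ.filter (fun d : Fin ((κ - 3) * q) => f (Sum.inr d) = s)).card
        = κ - 3) := by
  have hfibre : ∀ s ∈ S, ({e | f (Sum.inl e) = s} : Finset E) = s.1 :=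
    filter_eq_of_mem_of_card_eq_mul (fun e => f (Sum.inl e)) S Subtype.val 3
      (fun e => hrange _) hzero (fun s _ => hCc s.1 s.2) (hScard ▸ hE)
  refine ⟨fun s hs e => by simpa using Finset.ext_iff.mp (hfibre s hs) e, fun s hs => ?_⟩
  have hsplit := hcount s hs
  rw [card_filter_univ_sum, hfibre s hs, hCc s.1 s.2] at hsplit
  omega

/-- In the Exact-3-cover reduction to single-level κ-MSBM (κ ≥ 3), any
zero-distance solution matches every selected treatment sample (a triplet `T`) to exactly
the 3 element control samples of `T` plus `κ - 3` dummy control samples. -/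
theorem stmt_13 {E : Type*} [Fintype E] [DecidableEq E] (q : ℕ)
    (hE : Fintype.card E = 3 * q)
    (Cc : Finset (Finset E)) (hCc : ∀ T ∈ Cc, T.card = 3)
    (κ : ℕ) (hκ : 3 ≤ κ)
    (S : Finset {T // T ∈ Cc})
    (f : (E ⊕ Fin ((κ - 3) * q)) → {T // T ∈ Cc})
    (hScard : S.card = q)
    (hrange : ∀ c, f c ∈ S)
    (hcount : ∀ s ∈ S,
      (Finset.univ.filter (fun c : E ⊕ Fin ((κ - 3) * q) => f c = s)).card = κ)
    (hzero : ∀ e : E, e ∈ (f (Sum.inl e)).1) :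
    (∀ s ∈ S, ∀ e : E, f (Sum.inl e) = s ↔ e ∈ s.1) ∧
    (∀ s ∈ S,
      (Finset.univ.filter (fun d : Fin ((κ - 3) * q) => f (Sum.inr d) = s)).card
        = κ - 3) :=
  stmt_13_general q hE Cc hCc κ S f hScard hrange hcount hzero
end

section
/- In the exact-matching-to-BM' reduction, zero-cost solutions correspond to exact matchings: given a bipartite graph G = (V_1 ∪ V_2, E_b ∪ E_r) with |V_1| = |V_2| = q and an integer k, construct the BM' instance with control nodes {v_r, v_b : v ∈ V_1}, treatment nodes V_2, zero distance exactly on pairs corresponding to original edges (blue edges attach to v_b, red to v_r), covariate-1 levels the pairs {v_r, v_b}, and covariate-2 levels blue/red with exactly k treatment nodes in the blue level. Then the BM' instance has a feasible matching of total distance 0 if and only if G has a perfect matching with exactly k blue edges. -/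
open Finset

/-!
A zero-cost feasible matching `f` sends every treatment node `u` along an edge, to the blue
copy of `f u` if `(f u, u)` is blue and to the red copy if it is red; since the two colour
classes are disjoint, the copy is determined by the edge. So `f` is the same thing as its
projection `g` to `V₁` together with the colours of the edges `(g u, u)`. The covariate-1
balance says that every `v ∈ V₁` is hit exactly once, i.e. that `g` is bijective, and the
covariate-2 balance says that exactly `k` of the edges used are blue.
-/

theorem Function.bijective_iff_card_filter_eq_one {α β : Type*} [Fintype α] [DecidableEq β]
    (f : α → β) : Function.Bijective f ↔ ∀ b, #{a | f a = b} = 1 := by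
  simp only [Function.bijective_iff_existsUnique, Fintype.existsUnique_iff_card_one]

def edgeColour {E : Type*} [DecidableEq E] (Eb : Finset E) (e : E) : Fin 2 :=
  if e ∈ Eb then 1 else 0

theorem edgeColour_eq_one_iff {E : Type*} [DecidableEq E] {Eb : Finset E} {e : E} :
    edgeColour Eb e = 1 ↔ e ∈ Eb := by
  unfold edgeColour
  split_ifs <;> simp_all

theorem colouredEdge_iff {E : Type*} [DecidableEq E] {Eb Er : Finset E} (hdisj : Disjoint Eb Er)
    {e : E} {c : Fin 2} :
    (c = 1 ∧ e ∈ Eb) ∨ (c = 0 ∧ e ∈ Er) ↔ e ∈ Eb ∪ Er ∧ c = edgeColour Eb e := by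
  unfold edgeColour
  by_cases hb : e ∈ Eb
  · simp [hb, Finset.disjoint_left.mp hdisj hb]
  · simp [hb, and_comm]

theorem stmt_18_general {V1 V2 : Type*} [Fintype V2] [DecidableEq V1] [DecidableEq V2]
    (k : ℕ)
    (Eb Er : Finset (V1 × V2)) (hdisj : Disjoint Eb Er) :
    (∃ f : V2 → V1 × Fin 2,
      Function.Injective f ∧
      (∀ v : V1, ((Finset.univ : Finset V2).filter (fun u => (f u).1 = v)).card = 1) ∧
      ((Finset.univ : Finset V2).filter (fun u => (f u).2 = 1)).card = k ∧
      (∀ u : V2, ((f u).2 = 1 ∧ ((f u).1, u) ∈ Eb) ∨ ((f u).2 = 0 ∧ ((f u).1, u) ∈ Er)))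
    ↔ (∃ g : V2 → V1,
      Function.Bijective g ∧
      (∀ u : V2, (g u, u) ∈ Eb ∪ Er) ∧
      ((Finset.univ : Finset V2).filter (fun u => (g u, u) ∈ Eb)).card = k) := by
  constructor
  · rintro ⟨f, -, hfib, hcnt, hcase⟩
    have hcol u := (colouredEdge_iff hdisj).1 (hcase u)
    refine ⟨fun u => (f u).1, (Function.bijective_iff_card_filter_eq_one _).2 hfib,
      fun u => (hcol u).1, ?_⟩
    rw [← hcnt]
    congr 1
    exact filter_congr fun u _ => by rw [(hcol u).2, edgeColour_eq_one_iff]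
  · rintro ⟨g, hg, hmem, hcnt⟩
    refine ⟨fun u => (g u, edgeColour Eb (g u, u)),
      Function.Injective.of_comp (f := Prod.fst) hg.1,
      (Function.bijective_iff_card_filter_eq_one _).1 hg, ?_,
      fun u => (colouredEdge_iff hdisj).2 ⟨hmem u, rfl⟩⟩
    rw [← hcnt]
    congr 1
    exact filter_congr fun u _ => edgeColour_eq_one_iff

/-- In the exact-matching-to-BM' reduction, zero-cost solutions correspond
to exact matchings: the BM' instance (control nodes `V₁ × Fin 2` with `(v,1)` the blue
copy and `(v,0)` the red copy; treatment nodes `V₂`; covariate 1 levels the pairs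
`{v_r, v_b}`, covariate 2 levels blue/red with exactly `k` blue treatment nodes) has a
feasible matching of total distance 0 iff the bipartite graph has a perfect matching with
exactly `k` blue edges. -/
theorem stmt_18 {V1 V2 : Type*} [Fintype V1] [Fintype V2] [DecidableEq V1] [DecidableEq V2]
    (q k : ℕ) (h1 : Fintype.card V1 = q) (h2 : Fintype.card V2 = q)
    (Eb Er : Finset (V1 × V2)) (hdisj : Disjoint Eb Er) :
    (∃ f : V2 → V1 × Fin 2,
      Function.Injective f ∧
      (∀ v : V1, ((Finset.univ : Finset V2).filter (fun u => (f u).1 = v)).card = 1) ∧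
      ((Finset.univ : Finset V2).filter (fun u => (f u).2 = 1)).card = k ∧
      (∀ u : V2, ((f u).2 = 1 ∧ ((f u).1, u) ∈ Eb) ∨ ((f u).2 = 0 ∧ ((f u).1, u) ∈ Er)))
    ↔ (∃ g : V2 → V1,
      Function.Bijective g ∧
      (∀ u : V2, (g u, u) ∈ Eb ∪ Er) ∧
      ((Finset.univ : Finset V2).filter (fun u => (g u, u) ∈ Eb)).card = k) :=
  stmt_18_general k Eb Er hdisj
end

section
/- For the 1-covariate minimum κ-imbalance problem, the minimum of ∑_{i=1}^{k} | |S'∩L'_i| − κ·ℓ_i | over all selections S' ⊆ C with |S'| = κ·n equals ∑_{i=1}^{k} (κ·ℓ_i − min(κ·ℓ_i, ℓ'_i)) + max(0, κ·n − ∑_{i=1}^{k} min(κ·ℓ_i, ℓ'_i)) computed for the selection picking min(κ·ℓ_i, ℓ'_i) from each level and filling arbitrarily; in particular, when ∑_i min(κ·ℓ_i, ℓ'_i) = κ·n the minimum imbalance is ∑_{i=1}^k max(0, κ·ℓ_i − ℓ'_i). -/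
open Finset

/-!
Writing `sᵢ` for the number of selected units of level `i` and `tᵢ` for its target, one has
`|sᵢ - tᵢ| = sᵢ + tᵢ - 2 min(tᵢ, sᵢ)`. When `∑ sᵢ = ∑ tᵢ = N` the imbalance is therefore
`2N - 2 ∑ min(tᵢ, sᵢ)`, so minimising it means maximising `∑ min(tᵢ, sᵢ)`. Since `sᵢ` is at most
the level size `cᵢ`, this sum is at most `M = ∑ min(tᵢ, cᵢ)`, and the bound is attained by taking
`min(tᵢ, cᵢ)` units from every level and filling up arbitrarily. The minimum is `2(N - M)`.
-/

theorem natAbs_sub_add_two_mul_min (a b : ℕ) :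
    ((a : ℤ) - b).natAbs + 2 * min b a = a + b := by
  omega

section Levels

variable {β ι : Type*} [Fintype ι] [DecidableEq ι] (f : β → ι)

theorem sum_natAbs_card_filter_sub_add_two_mul_sum_min (S : Finset β) (t : ι → ℕ) :
    ∑ i, (((S.filter (fun x => f x = i)).card : ℤ) - t i).natAbs
        + 2 * ∑ i, min (t i) (S.filter (fun x => f x = i)).card
      = S.card + ∑ i, t i := by
  rw [mul_sum, ← sum_add_distrib,
    card_eq_sum_card_fiberwise (f := f) (t := univ) fun x _ => mem_univ (f x),
    ← sum_add_distrib]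
  exact sum_congr rfl fun i _ => natAbs_sub_add_two_mul_min _ _

theorem exists_subset_card_eq_forall_le_card_filter (C : Finset β) (a : ι → ℕ) {N : ℕ}
    (ha : ∀ i, a i ≤ (C.filter (fun x => f x = i)).card)
    (haN : ∑ i, a i ≤ N) (hNC : N ≤ C.card) :
    ∃ S ⊆ C, S.card = N ∧ ∀ i, a i ≤ (S.filter (fun x => f x = i)).card := by
  classical
  choose D hDC hDcard using fun i => exists_subset_card_eq (ha i)
  have hD_sub : univ.biUnion D ⊆ C := fun x hx => by
    obtain ⟨i, -, hxi⟩ := mem_biUnion.mp hx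
    exact (mem_filter.mp (hDC i hxi)).1
  have hD_card : (univ.biUnion D).card = ∑ i, a i := by
    rw [card_biUnion fun i _ j _ hij => disjoint_left.mpr fun x hxi hxj =>
      hij ((mem_filter.mp (hDC i hxi)).2.symm.trans (mem_filter.mp (hDC j hxj)).2)]
    exact sum_congr rfl fun i _ => hDcard i
  obtain ⟨S, hDS, hSC, hScard⟩ := exists_subsuperset_card_eq hD_sub (hD_card ▸ haN) hNC
  refine ⟨S, hSC, hScard, fun i => ?_⟩
  rw [← hDcard i]
  exact card_le_card fun x hx =>
    mem_filter.mpr ⟨hDS (mem_biUnion.mpr ⟨i, mem_univ i, hx⟩), (mem_filter.mp (hDC i hx)).2⟩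

theorem isLeast_sum_natAbs_card_filter_sub (C : Finset β) (t : ι → ℕ) {N : ℕ}
    (ht : ∑ i, t i = N) (hNC : N ≤ C.card) :
    IsLeast {m : ℕ | ∃ S ⊆ C, S.card = N ∧
        ∑ i, (((S.filter (fun x => f x = i)).card : ℤ) - t i).natAbs = m}
      (∑ i, (t i - min (t i) (C.filter (fun x => f x = i)).card)
        + (N - ∑ i, min (t i) (C.filter (fun x => f x = i)).card)) := by
  set M := ∑ i, min (t i) (C.filter (fun x => f x = i)).card
  have hMN : M ≤ N := ht ▸ sum_le_sum fun i _ => min_le_left _ _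
  have hdeficit : ∑ i, (t i - min (t i) (C.filter (fun x => f x = i)).card) + M = N := by
    rw [← sum_add_distrib, ← ht]
    exact sum_congr rfl fun i _ => Nat.sub_add_cancel (min_le_left _ _)
  have hcard_filter_le {S : Finset β} (hSC : S ⊆ C) (i : ι) :
      (S.filter (fun x => f x = i)).card ≤ (C.filter (fun x => f x = i)).card :=
    card_le_card (filter_subset_filter _ hSC)
  constructor
  · obtain ⟨S, hSC, hScard, hS⟩ := exists_subset_card_eq_forall_le_card_filter f C
      (fun i => min (t i) (C.filter (fun x => f x = i)).card) (fun i => min_le_right _ _)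
      hMN hNC
    have hmin : ∑ i, min (t i) (S.filter (fun x => f x = i)).card = M :=
      sum_congr rfl fun i _ => by have := hS i; have := hcard_filter_le hSC i; omega
    refine ⟨S, hSC, hScard, ?_⟩
    have := sum_natAbs_card_filter_sub_add_two_mul_sum_min f S t
    omega
  · rintro m ⟨S, hSC, hScard, rfl⟩
    have hle : ∑ i, min (t i) (S.filter (fun x => f x = i)).card ≤ M :=
      sum_le_sum fun i _ => min_le_min le_rfl (hcard_filter_le hSC i)
    have := sum_natAbs_card_filter_sub_add_two_mul_sum_min f S t
    omega

end Levels

theorem stmt_19_general {β : Type*} (k n κ : ℕ)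
    (C : Finset β) (levC : β → Fin k) (ℓ : Fin k → ℕ)
    (hn : ∑ i, ℓ i = n) (hC : κ * n ≤ C.card) :
    IsLeast
      {m : ℕ | ∃ S' ⊆ C, S'.card = κ * n ∧
        ∑ i : Fin k,
          (((S'.filter (fun c => levC c = i)).card : ℤ) - κ * ℓ i).natAbs = m}
      ((∑ i : Fin k,
          (κ * ℓ i - min (κ * ℓ i) ((C.filter (fun c => levC c = i)).card)))
        + (κ * n - ∑ i : Fin k,
            min (κ * ℓ i) ((C.filter (fun c => levC c = i)).card))) ∧
    ((∑ i : Fin k, min (κ * ℓ i) ((C.filter (fun c => levC c = i)).card) = κ * n) →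
      IsLeast
        {m : ℕ | ∃ S' ⊆ C, S'.card = κ * n ∧
          ∑ i : Fin k,
            (((S'.filter (fun c => levC c = i)).card : ℤ) - κ * ℓ i).natAbs = m}
        (∑ i : Fin k, (κ * ℓ i - (C.filter (fun c => levC c = i)).card))) := by
  have hleast := isLeast_sum_natAbs_card_filter_sub levC C (fun i => κ * ℓ i)
    (by rw [← mul_sum, hn]) hC
  simp only [Nat.cast_mul] at hleast
  refine ⟨hleast, fun hM => ?_⟩
  rwa [hM, Nat.sub_self, add_zero, sum_congr rfl fun i _ => tsub_min] at hleast

/-- For the 1-covariate minimum κ-imbalance problem, the minimum of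
`∑ᵢ | |S'∩L'ᵢ| − κ·ℓᵢ |` over `S' ⊆ C` with `|S'| = κ·n` equals
`∑ᵢ (κ·ℓᵢ − min(κ·ℓᵢ, ℓ'ᵢ)) + max(0, κ·n − ∑ᵢ min(κ·ℓᵢ, ℓ'ᵢ))` (natural subtraction is
truncated); in particular, when `∑ᵢ min(κ·ℓᵢ, ℓ'ᵢ) = κ·n` the minimum imbalance is
`∑ᵢ max(0, κ·ℓᵢ − ℓ'ᵢ)`. -/
theorem stmt_19 {β : Type*} (k n κ : ℕ) (hκ : 0 < κ)
    (C : Finset β) (levC : β → Fin k) (ℓ : Fin k → ℕ)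
    (hn : ∑ i, ℓ i = n) (hC : κ * n ≤ C.card) :
    IsLeast
      {m : ℕ | ∃ S' ⊆ C, S'.card = κ * n ∧
        ∑ i : Fin k,
          (((S'.filter (fun c => levC c = i)).card : ℤ) - κ * ℓ i).natAbs = m}
      ((∑ i : Fin k,
          (κ * ℓ i - min (κ * ℓ i) ((C.filter (fun c => levC c = i)).card)))
        + (κ * n - ∑ i : Fin k,
            min (κ * ℓ i) ((C.filter (fun c => levC c = i)).card))) ∧
    ((∑ i : Fin k, min (κ * ℓ i) ((C.filter (fun c => levC c = i)).card) = κ * n) →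
      IsLeast
        {m : ℕ | ∃ S' ⊆ C, S'.card = κ * n ∧
          ∑ i : Fin k,
            (((S'.filter (fun c => levC c = i)).card : ℤ) - κ * ℓ i).natAbs = m}
        (∑ i : Fin k, (κ * ℓ i - (C.filter (fun c => levC c = i)).card))) :=
  stmt_19_general k n κ C levC ℓ hn hC
end
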